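/- On the Lie algebra 𝔫₆ (ℝ⁷ with nonzero basis brackets [e₁,e₂] = e₄, [e₁,e₃] = e₅, [e₁,e₄] = e₆, [e₁,e₅] = e₇), the alternating 3-form φ₆ = e^{123} + e^{145} + e^{167} + e^{257} − e^{246} + e^{347} + e^{356} is closed with respect to the Chevalley–Eilenberg differential: dφ₆ = 0. -/
import Mathlib


/-- The basic alternating 3-form `e^{(i+1)(j+1)(k+1)} = eⁱ⁺¹∧eʲ⁺¹∧eᵏ⁺¹`
on ℝ⁷ = Fin 7 → ℝ, evaluated on three vectors (indices are 0-based). -/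
def triForm (i j k : Fin 7) (x y z : Fin 7 → ℝ) : ℝ :=
  x i * (y j * z k - y k * z j) - x j * (y i * z k - y k * z i) +
    x k * (y i * z j - y j * z i)

/-- The Chevalley–Eilenberg differential of an alternating 3-form `φ` with
respect to a bracket `br`, evaluated at (x₀,x₁,x₂,x₃):
dφ(x₀,x₁,x₂,x₃) = Σ_{0≤i<j≤3} (−1)^{i+j} φ([xᵢ,xⱼ], …omitting xᵢ,xⱼ…). -/
def CEdiff (br : (Fin 7 → ℝ) → (Fin 7 → ℝ) → (Fin 7 → ℝ))
    (φ : (Fin 7 → ℝ) → (Fin 7 → ℝ) → (Fin 7 → ℝ) → ℝ)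
    (x0 x1 x2 x3 : Fin 7 → ℝ) : ℝ :=
  -φ (br x0 x1) x2 x3 + φ (br x0 x2) x1 x3 - φ (br x0 x3) x1 x2
    - φ (br x1 x2) x0 x3 + φ (br x1 x3) x0 x2 - φ (br x2 x3) x0 x1

/-- The Lie bracket of 𝔫₆: [e₁,e₂] = e₄, [e₁,e₃] = e₅, [e₁,e₄] = e₆,
[e₁,e₅] = e₇ (0-based indices shifted by one), extended bilinearly. -/
def brN6 (x y : Fin 7 → ℝ) : Fin 7 → ℝ :=
  ![0, 0, 0, x 0 * y 1 - x 1 * y 0, x 0 * y 2 - x 2 * y 0,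
    x 0 * y 3 - x 3 * y 0, x 0 * y 4 - x 4 * y 0]

/-- φ₆ = e^{123} + e^{145} + e^{167} + e^{257} − e^{246} + e^{347} + e^{356}. -/
def phi6 (x y z : Fin 7 → ℝ) : ℝ :=
  triForm 0 1 2 x y z + triForm 0 3 4 x y z + triForm 0 5 6 x y z +
    triForm 1 4 6 x y z - triForm 1 3 5 x y z + triForm 2 3 6 x y z +
    triForm 2 4 5 x y z

lemma brN6_0 (x y : Fin 7 → ℝ) : brN6 x y 0 = 0 := rfl
lemma brN6_1 (x y : Fin 7 → ℝ) : brN6 x y 1 = 0 := rfl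
lemma brN6_2 (x y : Fin 7 → ℝ) : brN6 x y 2 = 0 := rfl
lemma brN6_3 (x y : Fin 7 → ℝ) : brN6 x y 3 = x 0 * y 1 - x 1 * y 0 := rfl
lemma brN6_4 (x y : Fin 7 → ℝ) : brN6 x y 4 = x 0 * y 2 - x 2 * y 0 := rfl
lemma brN6_5 (x y : Fin 7 → ℝ) : brN6 x y 5 = x 0 * y 3 - x 3 * y 0 := rfl
lemma brN6_6 (x y : Fin 7 → ℝ) : brN6 x y 6 = x 0 * y 4 - x 4 * y 0 := rfl

/-- the 3-form φ₆ on the Lie algebra 𝔫₆ is closed:  dφ₆ = 0. -/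
theorem phi6_closed :
    ∀ x0 x1 x2 x3 : Fin 7 → ℝ, CEdiff brN6 phi6 x0 x1 x2 x3 = 0 := by
  intro x0 x1 x2 x3
  simp only [CEdiff, phi6, triForm, brN6_0, brN6_1, brN6_2, brN6_3, brN6_4, brN6_5, brN6_6]
  ring
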